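/- Painlevé–Kuratowski convergence (Theorem 3): under the assumptions that n_xy^(m) is eventually equal to n_xy for each x ≠ y and δ^(m)·n_x^(m) → d_x > 0, the sequence of sets 𝒬_s^(m) := {(T−I)/δ^(m) : T(x,y)=(s·A(x,y)+n_xy^(m))/(s+n_x^(m)), A ∈ int(𝕋)} converges in the Painlevé–Kuratowski sense to 𝒬_s := {Q : Q(x,y)=(s·A(x,y)+n_xy)/d_x for x≠y, rows sum to zero, A ∈ 𝕋}; i.e., liminf_m 𝒬_s^(m) = limsup_m 𝒬_s^(m) = 𝒬_s. -/

import Mathlib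

/-!
Off the diagonal, `(T - I)/δ⁽ᵐ⁾` has entries `(s A(x,y) + n_xy⁽ᵐ⁾) / ((s + n_x⁽ᵐ⁾) δ⁽ᵐ⁾)`; the
numerator is eventually `s A(x,y) + n_xy` and the denominator tends to `d_x`, and the diagonal
follows because the rows of `(T - I)/δ⁽ᵐ⁾` sum to zero. Hence `Q⁽ᵐ⁾(A⁽ᵐ⁾) → Q(A)` whenever
stochastic `A⁽ᵐ⁾ → A`, also along any filter finer than `atTop`.
Every `A ∈ 𝕋` is a limit of strictly positive stochastic matrices, which gives the lim inf
inclusion. For the lim sup inclusion, the stochastic witnesses of a convergent sequence cluster at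
some `A ∈ 𝕋` by compactness of `𝕋`, i.e. converge to it along an ultrafilter, and the limit must
then be `Q(A)`.
-/

open Finset Filter Topology Matrix

lemma tendsto_add_mul_of_tendsto_zero {ι : Type*} {l : Filter ι} {δ r : ι → ℝ} {s d : ℝ}
    (hδ : Tendsto δ l (𝓝 0)) (hr : Tendsto (fun i => δ i * r i) l (𝓝 d)) :
    Tendsto (fun i => (s + r i) * δ i) l (𝓝 d) := by
  simpa using ((hδ.const_mul s).add hr).congr fun i => by ring

lemma mem_image_of_tendsto_of_isCompact {ι α β : Type*} [TopologicalSpace α]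
    [TopologicalSpace β] [T2Space β] {L : Filter ι} [L.NeBot] {K : Set α} (hK : IsCompact K)
    {A : ι → α} (hA : ∀ᶠ i in L, A i ∈ K) {f : ι → β} {G : α → β}
    (hG : ∀ l ≤ L, ∀ A₀ ∈ K, Tendsto A l (𝓝 A₀) → Tendsto f l (𝓝 (G A₀))) {Q : β}
    (hQ : Tendsto f L (𝓝 Q)) : Q ∈ G '' K := by
  obtain ⟨A₀, hA₀, hA₀_clust⟩ := hK.exists_mapClusterPt (tendsto_principal.2 hA)
  obtain ⟨U, hU, hAU⟩ := mapClusterPt_iff_ultrafilter.1 hA₀_clust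
  exact ⟨A₀, hA₀, tendsto_nhds_unique (hG U hU A₀ hA₀ hAU) (hQ.mono_left hU)⟩

section RowStochastic

variable {S : Type*} [Fintype S] [DecidableEq S]

lemma isCompact_rowStochastic : IsCompact (rowStochastic ℝ S : Set (Matrix S S ℝ)) := by
  have hclosed : IsClosed (rowStochastic ℝ S : Set (Matrix S S ℝ)) := by
    have : (rowStochastic ℝ S : Set (Matrix S S ℝ)) =
        {M | ∀ i j, 0 ≤ M i j} ∩ {M | ∀ i, ∑ j, M i j = 1} := by
      ext M; exact mem_rowStochastic_iff_sum
    rw [this]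
    simp only [Set.ofPred_forall]
    exact (isClosed_iInter fun i => isClosed_iInter fun j =>
      isClosed_le continuous_const (by fun_prop)).inter
      (isClosed_iInter fun i => isClosed_eq (by fun_prop) continuous_const)
  refine (isCompact_univ_pi fun _ => isCompact_univ_pi fun _ => isCompact_Icc (a := (0 : ℝ))
    (b := 1)).of_isClosed_subset hclosed fun M hM => ?_
  simp only [Set.mem_pi, Set.mem_univ, Set.mem_Icc, forall_const]
  exact fun i j => ⟨nonneg_of_mem_rowStochastic hM, le_one_of_mem_rowStochastic hM⟩

lemma exists_seq_pos_tendsto_of_mem_rowStochastic {A : Matrix S S ℝ}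
    (hA : A ∈ rowStochastic ℝ S) : ∃ A' : ℕ → Matrix S S ℝ,
      (∀ m, A' m ∈ rowStochastic ℝ S ∧ ∀ x y, 0 < A' m x y) ∧ Tendsto A' atTop (𝓝 A) := by
  set U : Matrix S S ℝ := Matrix.of fun _ _ => (Fintype.card S : ℝ)⁻¹
  have hU_pos : ∀ x y, 0 < U x y := fun x _ => by
    have : Nonempty S := ⟨x⟩
    simp [U, Fintype.card_pos]
  have hU : U ∈ rowStochastic ℝ S := by
    refine mem_rowStochastic_iff_sum.2 ⟨fun x y => (hU_pos x y).le, fun x => ?_⟩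
    have : Nonempty S := ⟨x⟩
    simp [U, Fintype.card_ne_zero]
  set ε : ℕ → ℝ := fun m => 1 / ((m : ℝ) + 1)
  have hε_pos : ∀ m, 0 < ε m := fun m => by positivity
  have hε_le : ∀ m, ε m ≤ 1 := fun m => by
    simp only [ε]; rw [div_le_one (by positivity)]; linarith [(m.cast_nonneg : (0 : ℝ) ≤ m)]
  have hε : Tendsto ε atTop (𝓝 0) := tendsto_one_div_add_atTop_nhds_zero_nat
  refine ⟨fun m => (1 - ε m) • A + ε m • U, fun m => ⟨?_, fun x y => ?_⟩, ?_⟩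
  · exact convex_rowStochastic hA hU (sub_nonneg.2 (hε_le m)) (hε_pos m).le (by ring)
  · have := mul_nonneg (sub_nonneg.2 (hε_le m)) (nonneg_of_mem_rowStochastic hA (i := x) (j := y))
    have := mul_pos (hε_pos m) (hU_pos x y)
    simp only [Matrix.add_apply, Matrix.smul_apply, smul_eq_mul]
    linarith
  · simpa using (((tendsto_const_nhds (x := (1 : ℝ))).sub hε).smul_const A).add (hε.smul_const U)

end RowStochastic

section RateMatrices

variable {S : Type*} [DecidableEq S]

noncomputable def discreteRateMatrix (s δ : ℝ) (N : S → S → ℝ) (r : S → ℝ) (A : Matrix S S ℝ) :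
    Matrix S S ℝ :=
  Matrix.of fun x y => ((s * A x y + N x y) / (s + r x) - if x = y then 1 else 0) / δ

lemma discreteRateMatrix_apply_of_ne {s δ : ℝ} {N : S → S → ℝ} {r : S → ℝ} {A : Matrix S S ℝ}
    {x y : S} (hxy : x ≠ y) :
    discreteRateMatrix s δ N r A x y = (s * A x y + N x y) / ((s + r x) * δ) := by
  simp [discreteRateMatrix, hxy, div_div]

lemma tendsto_discreteRateMatrix_apply_of_ne {ι : Type*} {l : Filter ι} {s : ℝ} {n : S → S → ℝ}
    {d : S → ℝ} {δ : ι → ℝ} {N : ι → S → S → ℝ} {r : ι → S → ℝ} {A : ι → Matrix S S ℝ}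
    {A₀ : Matrix S S ℝ} {x y : S} (hxy : x ≠ y) (hN : ∀ᶠ i in l, N i x y = n x y) (hδ : Tendsto δ l (𝓝 0))
    (hr : Tendsto (fun i => δ i * r i x) l (𝓝 (d x))) (hd : d x ≠ 0) (hA : Tendsto A l (𝓝 A₀)) :
    Tendsto (fun i => discreteRateMatrix s (δ i) (N i) (r i) (A i) x y) l
      (𝓝 ((s * A₀ x y + n x y) / d x)) := by
  have hAxy : Tendsto (fun i => A i x y) l (𝓝 (A₀ x y)) :=
    tendsto_pi_nhds.1 (tendsto_pi_nhds.1 hA x) y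
  have hNxy : Tendsto (fun i => N i x y) l (𝓝 (n x y)) :=
    tendsto_const_nhds.congr' (hN.mono fun _ h => h.symm)
  exact (((hAxy.const_mul s).add hNxy).div (tendsto_add_mul_of_tendsto_zero hδ hr) hd).congr
    fun i => (discreteRateMatrix_apply_of_ne hxy).symm

variable [Fintype S]

noncomputable def rateMatrix (s : ℝ) (n : S → S → ℝ) (d : S → ℝ) (A : Matrix S S ℝ) :
    Matrix S S ℝ :=
  Matrix.of fun x y =>
    if x = y then -∑ z ∈ univ.erase x, (s * A x z + n x z) / d x else (s * A x y + n x y) / d x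

lemma discreteRateMatrix_apply_self {s δ : ℝ} {N : S → S → ℝ} {r : S → ℝ} {A : Matrix S S ℝ}
    {x : S} (hA : ∑ y, A x y = 1) (hN : ∑ y, N x y = r x) (hr : s + r x ≠ 0) :
    discreteRateMatrix s δ N r A x x = -∑ z ∈ univ.erase x, discreteRateMatrix s δ N r A x z := by
  have hrow : ∑ y, discreteRateMatrix s δ N r A x y = 0 := by
    simp only [discreteRateMatrix, Matrix.of_apply, ← sum_div, sum_sub_distrib, sum_add_distrib,
      ← mul_sum, hA, hN, mul_one, div_self hr, sum_ite_eq, mem_univ, if_true, sub_self, zero_div]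
  rw [← add_sum_erase _ _ (mem_univ x)] at hrow
  linarith

lemma rateMatrix_image_rowStochastic (s : ℝ) (n : S → S → ℝ) (d : S → ℝ) :
    rateMatrix s n d '' rowStochastic ℝ S = {Q | ∃ A : Matrix S S ℝ,
      (∀ x y, 0 ≤ A x y) ∧ (∀ x, ∑ y, A x y = 1) ∧
      (∀ x y, Q x y =
        if x = y then -∑ z ∈ univ.erase x, (s * A x z + n x z) / d x
        else (s * A x y + n x y) / d x)} := by
  ext Q
  simp only [Set.mem_ofPred_eq, Set.mem_image, SetLike.mem_coe, mem_rowStochastic_iff_sum,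
    and_assoc, ← Matrix.ext_iff, rateMatrix, Matrix.of_apply, eq_comm (a := Q _ _)]

lemma discreteRateMatrix_image_pos (s δ : ℝ) (N : S → S → ℝ) (r : S → ℝ) :
    discreteRateMatrix s δ N r '' {A | A ∈ rowStochastic ℝ S ∧ ∀ x y, 0 < A x y} =
      {Q | ∃ A : Matrix S S ℝ, (∀ x y, 0 < A x y) ∧ (∀ x, ∑ y, A x y = 1) ∧
        (∀ x y, Q x y = ((s * A x y + N x y) / (s + r x) - if x = y then 1 else 0) / δ)} := by
  ext Q
  simp only [Set.mem_ofPred_eq, Set.mem_image, mem_rowStochastic_iff_sum, and_assoc,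
    ← Matrix.ext_iff, discreteRateMatrix, Matrix.of_apply, eq_comm (a := Q _ _)]
  exact exists_congr fun A => ⟨fun ⟨_, h1, hpos, hQ⟩ => ⟨hpos, h1, hQ⟩,
    fun ⟨hpos, h1, hQ⟩ => ⟨fun x y => (hpos x y).le, h1, hpos, hQ⟩⟩

lemma tendsto_discreteRateMatrix {ι : Type*} {l : Filter ι} {s : ℝ} {n : S → S → ℝ} {d : S → ℝ}
    {δ : ι → ℝ} {N : ι → S → S → ℝ} {r : ι → S → ℝ} {A : ι → Matrix S S ℝ} {A₀ : Matrix S S ℝ}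
    (hN : ∀ x y, x ≠ y → ∀ᶠ i in l, N i x y = n x y)
    (hNr : ∀ i x, ∑ y, N i x y = r i x) (hδ : Tendsto δ l (𝓝 0))
    (hr : ∀ x, Tendsto (fun i => δ i * r i x) l (𝓝 (d x))) (hd : ∀ x, d x ≠ 0)
    (hA1 : ∀ i x, ∑ y, A i x y = 1) (hA : Tendsto A l (𝓝 A₀)) :
    Tendsto (fun i => discreteRateMatrix s (δ i) (N i) (r i) (A i)) l
      (𝓝 (rateMatrix s n d A₀)) := by
  have hoff {x y : S} (hxy : x ≠ y) := tendsto_discreteRateMatrix_apply_of_ne (s := s) hxy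
    (hN x y hxy) hδ (hr x) (hd x) hA
  refine tendsto_pi_nhds.2 fun x => tendsto_pi_nhds.2 fun y => ?_
  rcases eq_or_ne x y with rfl | hxy
  · have hr_ne : ∀ᶠ i in l, s + r i x ≠ 0 :=
      ((tendsto_add_mul_of_tendsto_zero (s := s) hδ (hr x)).eventually_ne (hd x)).mono
        fun _ h h0 => h (by simp [h0])
    simp only [rateMatrix, Matrix.of_apply, if_true]
    refine (tendsto_finsetSum _ fun z hz => hoff (Ne.symm (ne_of_mem_erase hz))).neg.congr' ?_
    exact hr_ne.mono fun i h => (discreteRateMatrix_apply_self (hA1 i x) (hNr i x) h).symm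
  · simpa only [rateMatrix, Matrix.of_apply, if_neg hxy] using hoff hxy

end RateMatrices

theorem stmt_14_general (S : Type*) [Fintype S] [DecidableEq S]
    (tmax : ℝ) (s : ℝ)
    (ndisc : ℕ → S → S → ℕ)
    (nrow : ℕ → S → ℕ) (hnrow : ∀ m x, nrow m x = ∑ y, ndisc m x y)
    (n : S → S → ℝ)
    (hn : ∀ x y, x ≠ y → ∀ᶠ m in atTop, (ndisc m x y : ℝ) = n x y)
    (d : S → ℝ) (hd : ∀ x, 0 < d x)
    (hdn : ∀ x, Tendsto (fun m : ℕ => (tmax / m) * (nrow m x : ℝ)) atTop (nhds (d x)))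
    (Qs : Set (Matrix S S ℝ))
    (hQs : Qs = {Q | ∃ A : Matrix S S ℝ,
      (∀ x y, 0 ≤ A x y) ∧ (∀ x, ∑ y, A x y = 1) ∧
      (∀ x y, Q x y =
        if x = y then -∑ z ∈ Finset.univ.erase x, (s * A x z + n x z) / d x
        else (s * A x y + n x y) / d x)})
    (Qsm : ℕ → Set (Matrix S S ℝ))
    (hQsm : ∀ m, Qsm m = {Q | ∃ A : Matrix S S ℝ,
      (∀ x y, 0 < A x y) ∧ (∀ x, ∑ y, A x y = 1) ∧
      (∀ x y, Q x y =
        ((s * A x y + (ndisc m x y : ℝ)) / (s + (nrow m x : ℝ))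
          - (if x = y then (1 : ℝ) else 0)) / (tmax / m))}) :
    (∀ Q ∈ Qs, ∃ Qseq : ℕ → Matrix S S ℝ,
      (∀ m : ℕ, 0 < m → Qseq m ∈ Qsm m) ∧
      Tendsto Qseq atTop (nhds Q)) ∧
    (∀ Qseq : ℕ → Matrix S S ℝ,
      (∀ m : ℕ, 0 < m → Qseq m ∈ Qsm m) →
      ∀ (φ : ℕ → ℕ), StrictMono φ →
      ∀ Qlim : Matrix S S ℝ,
        Tendsto (fun k => Qseq (φ k)) atTop (nhds Qlim) → Qlim ∈ Qs) := by
  rw [← rateMatrix_image_rowStochastic] at hQs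
  subst hQs
  set Qm : ℕ → Matrix S S ℝ → Matrix S S ℝ := fun m =>
    discreteRateMatrix s (tmax / m) (fun x y => ndisc m x y) (fun x => nrow m x)
  have hQsm' (m : ℕ) : Qsm m = Qm m '' {A | A ∈ rowStochastic ℝ S ∧ ∀ x y, 0 < A x y} := by
    rw [hQsm, discreteRateMatrix_image_pos]
  have hlim {l : Filter ℕ} {m : ℕ → ℕ} (hm : Tendsto m l atTop) {A : ℕ → Matrix S S ℝ}
      (hA : ∀ k, A k ∈ rowStochastic ℝ S) {A₀ : Matrix S S ℝ} (hA₀ : Tendsto A l (𝓝 A₀)) :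
      Tendsto (fun k => Qm (m k) (A k)) l (𝓝 (rateMatrix s n d A₀)) :=
    tendsto_discreteRateMatrix (fun x y hxy => hm.eventually (hn x y hxy))
      (fun k x => by simp [hnrow]) ((tendsto_const_div_atTop_nhds_zero_nat tmax).comp hm)
      (fun x => (hdn x).comp hm) (fun x => (hd x).ne')
      (fun k => sum_row_of_mem_rowStochastic (hA k)) hA₀
  refine ⟨?_, fun Qseq hQseq φ hφ Qlim hQlim => ?_⟩
  · rintro _ ⟨A₀, hA₀, rfl⟩
    obtain ⟨A, hA, hA_lim⟩ := exists_seq_pos_tendsto_of_mem_rowStochastic hA₀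
    exact ⟨fun m => Qm m (A m), fun m _ => hQsm' m ▸ ⟨A m, hA m, rfl⟩,
      hlim tendsto_id (fun m => (hA m).1) hA_lim⟩
  · have hex (k : ℕ) : ∃ A ∈ rowStochastic ℝ S, Qm (φ (k + 1)) A = Qseq (φ (k + 1)) := by
      obtain ⟨A, hA, hAQ⟩ := hQsm' _ ▸ hQseq _ ((Nat.zero_le _).trans_lt (hφ k.lt_succ_self))
      exact ⟨A, hA.1, hAQ⟩
    choose A hA hAQ using hex
    have hshift := tendsto_add_atTop_nat 1
    refine mem_image_of_tendsto_of_isCompact isCompact_rowStochastic (Eventually.of_forall hA)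
      (fun l hl A₀ _ hAl => ?_) (hQlim.comp hshift)
    exact (hlim (hφ.tendsto_atTop.comp (hshift.mono_left hl)) hA hAl).congr fun k => hAQ k

/-- Theorem 3, Painlevé–Kuratowski convergence: the sets `𝒬ₛ⁽ᵐ⁾`
converge to `𝒬ₛ`: every `Q ∈ 𝒬ₛ` is a limit of a sequence with `Q_m ∈ 𝒬ₛ⁽ᵐ⁾`,
and every accumulation point of such a sequence lies in `𝒬ₛ`; here
`𝒬ₛ⁽ᵐ⁾ = {(T−I)/δ⁽ᵐ⁾ : T(x,y) = (s·A(x,y)+n_xy⁽ᵐ⁾)/(s+n_x⁽ᵐ⁾), A ∈ int(𝕋)}`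
and `𝒬ₛ = {Q_A : A ∈ 𝕋}`, assuming the off-diagonal counts `n_xy⁽ᵐ⁾` are
eventually equal to `n_xy` and `δ⁽ᵐ⁾·n_x⁽ᵐ⁾ → d_x > 0` with `δ⁽ᵐ⁾ = tmax/m`. -/
theorem stmt_14 (S : Type*) [Fintype S] [DecidableEq S]
    (tmax : ℝ) (htmax : 0 < tmax) (s : ℝ) (hs : 0 ≤ s)
    (ndisc : ℕ → S → S → ℕ)
    (nrow : ℕ → S → ℕ) (hnrow : ∀ m x, nrow m x = ∑ y, ndisc m x y)
    (n : S → S → ℝ)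
    (hn : ∀ x y, x ≠ y → ∀ᶠ m in atTop, (ndisc m x y : ℝ) = n x y)
    (d : S → ℝ) (hd : ∀ x, 0 < d x)
    (hdn : ∀ x, Tendsto (fun m : ℕ => (tmax / m) * (nrow m x : ℝ)) atTop (nhds (d x)))
    (Qs : Set (Matrix S S ℝ))
    (hQs : Qs = {Q | ∃ A : Matrix S S ℝ,
      (∀ x y, 0 ≤ A x y) ∧ (∀ x, ∑ y, A x y = 1) ∧
      (∀ x y, Q x y =
        if x = y then -∑ z ∈ Finset.univ.erase x, (s * A x z + n x z) / d x
        else (s * A x y + n x y) / d x)})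
    (Qsm : ℕ → Set (Matrix S S ℝ))
    (hQsm : ∀ m, Qsm m = {Q | ∃ A : Matrix S S ℝ,
      (∀ x y, 0 < A x y) ∧ (∀ x, ∑ y, A x y = 1) ∧
      (∀ x y, Q x y =
        ((s * A x y + (ndisc m x y : ℝ)) / (s + (nrow m x : ℝ))
          - (if x = y then (1 : ℝ) else 0)) / (tmax / m))}) :
    (∀ Q ∈ Qs, ∃ Qseq : ℕ → Matrix S S ℝ,
      (∀ m : ℕ, 0 < m → Qseq m ∈ Qsm m) ∧
      Tendsto Qseq atTop (nhds Q)) ∧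
    (∀ Qseq : ℕ → Matrix S S ℝ,
      (∀ m : ℕ, 0 < m → Qseq m ∈ Qsm m) →
      ∀ (φ : ℕ → ℕ), StrictMono φ →
      ∀ Qlim : Matrix S S ℝ,
        Tendsto (fun k => Qseq (φ k)) atTop (nhds Qlim) → Qlim ∈ Qs) :=
  stmt_14_general S tmax s ndisc nrow hnrow n hn d hd hdn Qs hQs Qsm hQsm
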